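/- Quadratic-variation-type partition bound: assume H_i > 1/2 for every i ∈ {1,…,N} with a_i ≠ 0, let a ∈ ℝ^N \ {0}, let H_{i₀} = min{H_i : a_i ≠ 0}, and let t > 0. Then with C₂ = Σ_{i=1}^N a_i² ν_i t^{2(H_i − H_{i₀})} (where ν_i = 1 if H_i > 1/2 and ν_i = 2 − 2^{2H_i−1} otherwise), for every finite partition 0 = t_0 < t_1 < … < t_n = t of [0,t] with mesh |τ| = max_{1≤j≤n} (t_j − t_{j−1}), one has Σ_{j=1}^n f(t_{j−1}, t_j) ≤ C₂ · |τ|^{2H_{i₀}−1} · t. (Hence E(Σ_j (S_{t_j}^H − S_{t_{j−1}}^H)²) → 0 as the mesh tends to 0, so the quadratic variation of S^H(N,a) vanishes almost surely.) -/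

import Mathlib

open Real Finset

/-- The sub-fractional Brownian covariance. -/
noncomputable def subCov (H s t : ℝ) : ℝ :=
  s ^ (2 * H) + t ^ (2 * H) - (1 / 2) * ((s + t) ^ (2 * H) + |t - s| ^ (2 * H))

/-- The mixed sub-fractional covariance `C(s,t) = Σ_i a_i² c_{H_i}(s,t)`. -/
noncomputable def mixedCov (N : ℕ) (a H : Fin N → ℝ) (s t : ℝ) : ℝ :=
  ∑ i, (a i) ^ 2 * subCov (H i) s t

/-- The increment variance `f(s,t) = C(t,t) + C(s,s) − 2 C(s,t)`. -/
noncomputable def incVar (N : ℕ) (a H : Fin N → ℝ) (s t : ℝ) : ℝ :=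
  mixedCov N a H t t + mixedCov N a H s s - 2 * mixedCov N a H s t

/-- `ν_i = 1` if `H_i > 1/2`, and `2 − 2^{2H_i−1}` otherwise. -/
noncomputable def nu (h : ℝ) : ℝ := if 1 / 2 < h then 1 else 2 - (2 : ℝ) ^ (2 * h - 1)

/-! For `0 ≤ s ≤ u` and `p = 2h ≥ 1`, the increment variance of one sub-fractional component is
`(u - s)^p + (s + u)^p - 2^(p-1) (s^p + u^p)`, and convexity of `x ↦ x^p` makes the last two
terms together nonpositive, so it is at most `(u - s)^p`. Splitting
`Δ^(2H_i) ≤ t^(2(H_i - H_{i₀})) |τ|^(2H_{i₀} - 1) Δ` for each partition step `Δ` and summing the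
telescoping steps to `t` gives the bound. -/


lemma Real.add_rpow_le_two_rpow_mul {x y p : ℝ} (hx : 0 ≤ x) (hy : 0 ≤ y) (hp : 1 ≤ p) :
    (x + y) ^ p ≤ 2 ^ (p - 1) * (x ^ p + y ^ p) := by
  exact_mod_cast NNReal.rpow_add_le_mul_rpow_add_rpow ⟨x, hx⟩ ⟨y, hy⟩ hp

lemma subCov_self {h u : ℝ} (hh : 0 < h) (hu : 0 ≤ u) :
    subCov h u u = 2 * u ^ (2 * h) - 2 ^ (2 * h - 1) * u ^ (2 * h) := by
  have two_rpow : (2 : ℝ) ^ (2 * h) = 2 * 2 ^ (2 * h - 1) := by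
    rw [← Real.rpow_one_add' zero_le_two (by linarith)]; ring_nf
  rw [subCov, sub_self, abs_zero, Real.zero_rpow (by positivity), ← two_mul u,
    Real.mul_rpow zero_le_two hu, two_rpow]
  ring

noncomputable def subIncVar (h s u : ℝ) : ℝ :=
  subCov h u u + subCov h s s - 2 * subCov h s u

lemma subIncVar_eq {h s u : ℝ} (hh : 0 < h) (hs : 0 ≤ s) (hsu : s ≤ u) :
    subIncVar h s u
      = (u - s) ^ (2 * h) + (s + u) ^ (2 * h) - 2 ^ (2 * h - 1) * (s ^ (2 * h) + u ^ (2 * h)) := by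
  rw [subIncVar, subCov_self hh (hs.trans hsu), subCov_self hh hs, subCov,
    abs_of_nonneg (sub_nonneg.2 hsu)]
  ring

lemma subIncVar_le {h s u : ℝ} (hh : 1 / 2 ≤ h) (hs : 0 ≤ s) (hsu : s ≤ u) :
    subIncVar h s u ≤ (u - s) ^ (2 * h) := by
  rw [subIncVar_eq (by linarith) hs hsu]
  linarith [Real.add_rpow_le_two_rpow_mul hs (hs.trans hsu) (show 1 ≤ 2 * h by linarith)]

lemma incVar_eq_sum (N : ℕ) (a H : Fin N → ℝ) (s u : ℝ) :
    incVar N a H s u = ∑ i, a i ^ 2 * subIncVar (H i) s u := by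
  simp only [incVar, mixedCov, subIncVar, mul_sum, ← sum_add_distrib, ← sum_sub_distrib]
  exact sum_congr rfl fun i _ => by ring

lemma Real.rpow_add_add_one_le_mul {x m t α β : ℝ} (hx : 0 ≤ x) (hxm : x ≤ m) (hxt : x ≤ t)
    (hα : 0 ≤ α) (hβ : 0 ≤ β) : x ^ (α + β + 1) ≤ t ^ α * m ^ β * x := by
  have ht : 0 ≤ t := hx.trans hxt
  rw [add_assoc, Real.rpow_add' hx (by linarith), Real.rpow_add' hx (by linarith), Real.rpow_one,
    ← mul_assoc]
  gcongr

lemma incVar_le {N : ℕ} {a H : Fin N → ℝ} {h₀ : ℝ} (hbig : ∀ i, a i ≠ 0 → 1 / 2 < H i)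
    (h₀_le : ∀ i, a i ≠ 0 → h₀ ≤ H i) (h₀_ge : 1 / 2 ≤ h₀) {s u m t : ℝ} (hs : 0 ≤ s)
    (hsu : s ≤ u) (hum : u - s ≤ m) (hut : u ≤ t) :
    incVar N a H s u
      ≤ (∑ i, a i ^ 2 * nu (H i) * t ^ (2 * (H i - h₀))) * m ^ (2 * h₀ - 1) * (u - s) := by
  rw [incVar_eq_sum, sum_mul, sum_mul]
  refine sum_le_sum fun i _ => ?_
  rcases eq_or_ne (a i) 0 with hai | hai
  · simp [hai]
  rw [nu, if_pos (hbig i hai), mul_one]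
  have hD : subIncVar (H i) s u ≤ t ^ (2 * (H i - h₀)) * m ^ (2 * h₀ - 1) * (u - s) :=
    calc _ ≤ (u - s) ^ (2 * H i) := subIncVar_le (h₀_ge.trans (h₀_le i hai)) hs hsu
      _ = (u - s) ^ (2 * (H i - h₀) + (2 * h₀ - 1) + 1) := by ring_nf
      _ ≤ _ := Real.rpow_add_add_one_le_mul (sub_nonneg.2 hsu) hum (by linarith)
          (by linarith [h₀_le i hai]) (by linarith)
  calc _ ≤ a i ^ 2 * (t ^ (2 * (H i - h₀)) * m ^ (2 * h₀ - 1) * (u - s)) := by gcongr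
    _ = _ := by ring

theorem msfbm_quadratic_variation_bound_general (N : ℕ) (a H : Fin N → ℝ)
    (hbig : ∀ i, a i ≠ 0 → 1 / 2 < H i)
    (i₀ : Fin N) (hai₀ : a i₀ ≠ 0) (hmin : ∀ i, a i ≠ 0 → H i₀ ≤ H i)
    (t : ℝ)
    (n : ℕ) (τ : ℕ → ℝ) (hτ0 : τ 0 = 0) (hτn : τ n = t)
    (hmono : ∀ j < n, τ j < τ (j + 1))
    (mesh : ℝ) (hmesh : IsGreatest {d : ℝ | ∃ j < n, d = τ (j + 1) - τ j} mesh) :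
    ∑ j ∈ Finset.range n, incVar N a H (τ j) (τ (j + 1))
      ≤ (∑ i, (a i) ^ 2 * nu (H i) * t ^ (2 * (H i - H i₀)))
          * mesh ^ (2 * H i₀ - 1) * t := by
  have hτ_mono : StrictMonoOn τ (Set.Iic n) := strictMonoOn_Iic_of_lt_succ hmono
  have hτ_nonneg : ∀ j ≤ n, 0 ≤ τ j := fun j hj =>
    hτ0 ▸ hτ_mono.monotoneOn (Nat.zero_le n) hj (Nat.zero_le j)
  calc ∑ j ∈ range n, incVar N a H (τ j) (τ (j + 1))
      ≤ ∑ j ∈ range n, (∑ i, a i ^ 2 * nu (H i) * t ^ (2 * (H i - H i₀)))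
          * mesh ^ (2 * H i₀ - 1) * (τ (j + 1) - τ j) := by
        refine sum_le_sum fun j hj => ?_
        have hj : j < n := mem_range.1 hj
        exact incVar_le hbig hmin (hbig i₀ hai₀).le (hτ_nonneg j hj.le) (hmono j hj).le
          (hmesh.2 ⟨j, hj, rfl⟩) (hτn ▸ hτ_mono.monotoneOn hj (le_refl n) hj)
    _ = _ := by rw [← mul_sum, sum_range_sub, hτ0, hτn, sub_zero]

/-- Quadratic-variation-type partition bound: if `H_i > 1/2` whenever `a_i ≠ 0`, then for
any finite partition `0 = τ_0 < τ_1 < … < τ_n = t` of `[0,t]` with mesh `|τ|`,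
`Σ_{j=1}^n E(S_{τ_j}^H − S_{τ_{j−1}}^H)² ≤ C₂ |τ|^{2H_{i₀}−1} t`, where
`C₂ = Σ_i a_i² ν_i t^{2(H_i−H_{i₀})}` and `H_{i₀} = min{H_i : a_i ≠ 0}`. -/
theorem msfbm_quadratic_variation_bound (N : ℕ) (a H : Fin N → ℝ)
    (hH : ∀ i, H i ∈ Set.Ioo (0 : ℝ) 1) (ha : a ≠ 0)
    (hbig : ∀ i, a i ≠ 0 → 1 / 2 < H i)
    (i₀ : Fin N) (hai₀ : a i₀ ≠ 0) (hmin : ∀ i, a i ≠ 0 → H i₀ ≤ H i)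
    (t : ℝ) (ht : 0 < t)
    (n : ℕ) (hn : 1 ≤ n) (τ : ℕ → ℝ) (hτ0 : τ 0 = 0) (hτn : τ n = t)
    (hmono : ∀ j < n, τ j < τ (j + 1))
    (mesh : ℝ) (hmesh : IsGreatest {d : ℝ | ∃ j < n, d = τ (j + 1) - τ j} mesh) :
    ∑ j ∈ Finset.range n, incVar N a H (τ j) (τ (j + 1))
      ≤ (∑ i, (a i) ^ 2 * nu (H i) * t ^ (2 * (H i - H i₀)))
          * mesh ^ (2 * H i₀ - 1) * t :=
  msfbm_quadratic_variation_bound_general N a H hbig i₀ hai₀ hmin t n τ hτ0 hτn hmono mesh hmesh
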